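/- arXiv:math/0508125 — 3 statements merged into one kernel-verified Lean document; each statement's English description precedes it below -/
import Mathlib

section
/- For every integer k ≥ 2 there exists a constant C(k) > 0 such that for every sequence of complex numbers (a_n), every integer M, and all positive integers Q and N, one has ∑_{q=1}^{Q} ∑_{a mod q^k, gcd(a,q)=1} | ∑_{n=M+1}^{M+N} a_n e(a n / q^k) |² ≤ C(k) · Q·(Q^k + N) · ∑_{n=M+1}^{M+N} |a_n|². -/
open Finset Real

noncomputable def e (x : ℝ) : ℂ := Complex.exp (2 * Real.pi * Complex.I * x)

/-!
For fixed `q` only the denominator `D = q ^ k` matters, and we may drop the coprimality condition.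
Orthogonality of the additive characters modulo `D` gives
`∑_{r < D} |∑ₙ aₙ e(rn/D)|² = D ∑_{n ≡ m (mod D)} aₙ conj(aₘ)`, and by `2|aₙ aₘ| ≤ |aₙ|² + |aₘ|²`
this is at most `D (N / D + 1) ∑ |aₙ|²`. Summing over `q ≤ Q` gives the bound with `C = 1`.
-/

lemma e_add (x y : ℝ) : e (x + y) = e x * e y := by
  rw [e, e, e, ← Complex.exp_add]; push_cast; ring_nf

lemma conj_e (x : ℝ) : starRingEnd ℂ (e x) = e (-x) := by
  rw [e, e, ← Complex.exp_conj]; simp [map_ofNat]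

lemma e_zpow (x : ℝ) (t : ℤ) : e x ^ t = e (t * x) := by
  rw [e, e, ← Complex.exp_int_mul]; push_cast; ring_nf

lemma isPrimitiveRoot_e {D : ℕ} (hD : D ≠ 0) : IsPrimitiveRoot (e (1 / D)) D := by
  convert Complex.isPrimitiveRoot_exp D hD using 1
  rw [e]; push_cast; ring_nf

lemma sum_range_e_mul_div {D : ℕ} (hD : D ≠ 0) (t : ℤ) :
    ∑ r ∈ range D, e (r * t / D) = if (D : ℤ) ∣ t then (D : ℂ) else 0 := by
  have hζ := isPrimitiveRoot_e hD
  have hterm (r : ℕ) : e (r * t / D) = (e (1 / D) ^ t) ^ r := by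
    rw [← zpow_natCast, ← zpow_mul, e_zpow]; push_cast; ring_nf
  simp_rw [hterm]
  split_ifs with h
  · rw [(hζ.zpow_eq_one_iff_dvd t).2 h]; simp
  · rw [geom_sum_eq ((hζ.zpow_eq_one_iff_dvd t).not.2 h), ← zpow_natCast, ← zpow_mul, mul_comm,
      zpow_mul, zpow_natCast, hζ.pow_eq_one]
    simp

theorem sum_sum_filter_mul_le_sum_card_mul_sq {ι : Type*} (I : Finset ι) {R : ι → ι → Prop}
    [DecidableRel R] (hR : ∀ x y, R x y → R y x) (f : ι → ℝ) :
    ∑ n ∈ I, ∑ m ∈ I with R n m, f n * f m ≤ ∑ n ∈ I, #{m ∈ I | R n m} * f n ^ 2 := by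
  have hswap : ∑ n ∈ I, ∑ m ∈ I with R n m, f m ^ 2 = ∑ n ∈ I, ∑ m ∈ I with R n m, f n ^ 2 := by
    simp_rw [sum_filter]
    rw [sum_comm]
    exact sum_congr rfl fun n _ => sum_congr rfl fun m _ =>
      if_congr ⟨hR m n, hR n m⟩ rfl rfl
  calc ∑ n ∈ I, ∑ m ∈ I with R n m, f n * f m
      ≤ ∑ n ∈ I, ∑ m ∈ I with R n m, (f n ^ 2 + f m ^ 2) / 2 :=
        sum_le_sum fun n _ => sum_le_sum fun m _ => by linarith [two_mul_le_add_sq (f n) (f m)]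
    _ = ∑ n ∈ I, ∑ m ∈ I with R n m, f n ^ 2 := by
        simp_rw [add_div, sum_add_distrib, ← sum_div, hswap]; ring
    _ = ∑ n ∈ I, #{m ∈ I | R n m} * f n ^ 2 := by simp_rw [sum_const, nsmul_eq_mul]

lemma mul_card_filter_dvd_sub_le (D N : ℕ) (hD : 0 < D) (M n : ℤ) :
    D * #{m ∈ Icc (M + 1) (M + N) | (D : ℤ) ∣ n - m} ≤ D + N := by
  have hfilter : {m ∈ Icc (M + 1) (M + N) | (D : ℤ) ∣ n - m}
      = {m ∈ Ioc M (M + N) | m ≡ n [ZMOD D]} := by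
    simp_rw [Int.modEq_iff_dvd, Icc_add_one_left_eq_Ioc]
  have hcard := Int.Ioc_filter_modEq_card M (M + N) (r := D) (by exact_mod_cast hD) n
  rw [hfilter]
  zify
  rw [hcard]
  set x : ℚ := ((M + N : ℤ) - n) / (D : ℤ)
  set y : ℚ := (M - n) / (D : ℤ)
  have key : (D : ℚ) * (⌊x⌋ - ⌊y⌋) ≤ D + N :=
    calc (D : ℚ) * (⌊x⌋ - ⌊y⌋) ≤ D * (x - (y - 1)) := by
          gcongr <;> linarith [Int.floor_le x, Int.lt_floor_add_one y]
      _ = D + N := by simp only [x, y]; field_simp; push_cast; ring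
  rw [mul_max_of_nonneg _ _ (by positivity)]
  exact max_le (by exact_mod_cast key) (by positivity)

lemma sum_range_norm_sq_eq {D : ℕ} (hD : D ≠ 0) (I : Finset ℤ) (a : ℤ → ℂ) :
    ((∑ r ∈ range D, ‖∑ n ∈ I, a n * e (r * n / D)‖ ^ 2 : ℝ) : ℂ)
      = D * ∑ n ∈ I, ∑ m ∈ I with (D : ℤ) ∣ n - m, a n * starRingEnd ℂ (a m) := by
  have hterm (r : ℕ) (n m : ℤ) :
      a n * e (r * n / D) * starRingEnd ℂ (a m * e (r * m / D))
        = a n * starRingEnd ℂ (a m) * e (r * (n - m : ℤ) / D) := by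
    rw [map_mul, conj_e, mul_mul_mul_comm, ← e_add]; push_cast; ring_nf
  push_cast
  simp_rw [← Complex.mul_conj', map_sum, sum_mul_sum, hterm]
  rw [sum_comm, mul_sum]
  refine sum_congr rfl fun n _ => ?_
  rw [sum_comm, sum_filter, mul_sum]
  refine sum_congr rfl fun m _ => ?_
  rw [← mul_sum, sum_range_e_mul_div hD]
  split_ifs <;> ring

theorem sum_range_norm_sq_le {D : ℕ} (hD : 0 < D) (M : ℤ) (N : ℕ) (a : ℤ → ℂ) :
    ∑ r ∈ range D, ‖∑ n ∈ Icc (M + 1) (M + N), a n * e (r * n / D)‖ ^ 2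
      ≤ (D + N) * ∑ n ∈ Icc (M + 1) (M + N), ‖a n‖ ^ 2 := by
  set I := Icc (M + 1) (M + N)
  calc ∑ r ∈ range D, ‖∑ n ∈ I, a n * e (r * n / D)‖ ^ 2
      = ‖(D : ℂ) * ∑ n ∈ I, ∑ m ∈ I with (D : ℤ) ∣ n - m, a n * starRingEnd ℂ (a m)‖ := by
        rw [← sum_range_norm_sq_eq hD.ne', Complex.norm_of_nonneg (by positivity)]
    _ ≤ D * ∑ n ∈ I, ∑ m ∈ I with (D : ℤ) ∣ n - m, ‖a n‖ * ‖a m‖ := by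
        rw [norm_mul, Complex.norm_natCast]
        gcongr
        refine (norm_sum_le _ _).trans (sum_le_sum fun n _ => (norm_sum_le _ _).trans_eq ?_)
        simp
    _ ≤ D * ∑ n ∈ I, #{m ∈ I | (D : ℤ) ∣ n - m} * ‖a n‖ ^ 2 := by
        refine mul_le_mul_of_nonneg_left ?_ (by positivity)
        exact sum_sum_filter_mul_le_sum_card_mul_sq I (fun _ _ => dvd_sub_comm.1) _
    _ ≤ ∑ n ∈ I, (D + N) * ‖a n‖ ^ 2 := by
        rw [mul_sum]
        refine sum_le_sum fun n _ => ?_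
        rw [← mul_assoc]
        gcongr
        exact_mod_cast mul_card_filter_dvd_sub_le D N hD M n
    _ = (D + N) * ∑ n ∈ I, ‖a n‖ ^ 2 := (mul_sum _ _ _).symm

theorem stmt11_general (k : ℕ) : ∃ C : ℝ, C > 0 ∧
    ∀ (a : ℤ → ℂ) (M : ℤ) (Q N : ℕ), 0 < Q → 0 < N →
    ∑ q ∈ Finset.Icc 1 Q, ∑ r ∈ (Finset.range (q^k)).filter (fun r => Nat.gcd r q = 1),
      ‖∑ n ∈ Finset.Icc (M+1) (M+(N:ℤ)), a n * e (((r:ℝ) * (n:ℝ)) / (q:ℝ)^k)‖ ^ 2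
    ≤ C * (Q:ℝ) * ((Q:ℝ)^k + (N:ℝ)) *
        ∑ n ∈ Finset.Icc (M+1) (M+(N:ℤ)), ‖a n‖ ^ 2 := by
  refine ⟨1, one_pos, fun a M Q N _ _ => ?_⟩
  calc _ ≤ ∑ q ∈ Icc 1 Q, ∑ r ∈ range (q ^ k),
          ‖∑ n ∈ Icc (M + 1) (M + N), a n * e (r * n / (q : ℝ) ^ k)‖ ^ 2 :=
        sum_le_sum fun q _ => sum_le_sum_of_subset_of_nonneg (filter_subset _ _)
          fun _ _ _ => by positivity
    _ ≤ ∑ q ∈ Icc 1 Q, ((Q : ℝ) ^ k + N) * ∑ n ∈ Icc (M + 1) (M + N), ‖a n‖ ^ 2 := by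
        refine sum_le_sum fun q hq => ?_
        have hq := mem_Icc.1 hq
        have hbound := sum_range_norm_sq_le (D := q ^ k) (pow_pos hq.1 k) M N a
        push_cast at hbound
        exact hbound.trans (by gcongr; exact hq.2)
    _ = 1 * Q * ((Q : ℝ) ^ k + N) * ∑ n ∈ Icc (M + 1) (M + N), ‖a n‖ ^ 2 := by simp [mul_assoc]

theorem stmt11 (k : ℕ) (hk : 2 ≤ k) : ∃ C : ℝ, C > 0 ∧
    ∀ (a : ℤ → ℂ) (M : ℤ) (Q N : ℕ), 0 < Q → 0 < N →
    ∑ q ∈ Finset.Icc 1 Q, ∑ r ∈ (Finset.range (q^k)).filter (fun r => Nat.gcd r q = 1),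
      ‖∑ n ∈ Finset.Icc (M+1) (M+(N:ℤ)), a n * e (((r:ℝ) * (n:ℝ)) / (q:ℝ)^k)‖ ^ 2
    ≤ C * (Q:ℝ) * ((Q:ℝ)^k + (N:ℝ)) *
        ∑ n ∈ Finset.Icc (M+1) (M+(N:ℤ)), ‖a n‖ ^ 2 :=
  stmt11_general k
end

section
/- For every positive integer q, every integer M, every positive integer N, and every sequence of complex numbers (a_n), one has ∑*_{χ mod q²} | ∑_{n=M+1}^{M+N} a_n χ(n) |² ≤ (φ(q)/q) · ∑_{a mod q², gcd(a,q)=1} | ∑_{n=M+1}^{M+N} a_n e(a n / q²) |², where ∑* denotes summation over primitive Dirichlet characters modulo q². -/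
/-!
For a primitive character `χ` mod `Q` the Gauss sum `τ(χ̄)` has `|τ(χ̄)|² = Q` and
`∑_b χ̄(b) e(nb/Q) = χ(n) τ(χ̄)` for every `n`. Hence `Q |∑ aₙ χ(n)|² = |∑_b χ̄(b) T(b)|²` with
`T(b) = ∑ aₙ e(nb/Q)`. Adding the non-primitive characters only increases the left side, and
orthogonality of all characters mod `Q` gives `∑_χ |∑_b χ̄(b) T(b)|² = φ(Q) ∑_{b unit} |T(b)|²`.
For `Q = q²` one has `φ(Q)/Q = φ(q)/q`.
-/

open Finset Real
open scoped Classical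

namespace DirichletCharacter

lemma IsPrimitive.inv {R : Type*} [CommMonoidWithZero R] {N : ℕ} {χ : DirichletCharacter R N}
    (hχ : χ.IsPrimitive) : χ⁻¹.IsPrimitive := by
  rwa [isPrimitive_def, conductor_inv]

variable {N : ℕ} [NeZero N]

open ZMod

lemma IsPrimitive.gaussSum_inv_mul_gaussSum {χ : DirichletCharacter ℂ N} (hχ : χ.IsPrimitive) :
    gaussSum χ⁻¹ stdAddChar * gaussSum χ stdAddChar = N * χ (-1) := by
  have h := congr_fun (dft_dft (χ : ZMod N → ℂ)) 1
  rw [funext hχ.fourierTransform_eq_inv_mul_gaussSum, dft_mul_const, dft_comp_neg ⇑χ⁻¹] at h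
  simpa [hχ.inv.fourierTransform_eq_inv_mul_gaussSum] using h

lemma IsPrimitive.norm_gaussSum_sq {χ : DirichletCharacter ℂ N} (hχ : χ.IsPrimitive) :
    ‖gaussSum χ stdAddChar‖ ^ 2 = N := by
  have hstar : star (gaussSum χ stdAddChar) = χ (-1) * gaussSum χ⁻¹ stdAddChar := by
    rw [star_gaussSum_eq, AddChar.inv_mulShift, gaussSum_mulShift_of_isPrimitive _ hχ.inv,
      inv_inv]
  have hsq : χ (-1) * χ (-1) = 1 := by rw [← map_mul, neg_one_mul, neg_neg, map_one]
  apply Complex.ofReal_injective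
  rw [Complex.ofReal_pow, ← Complex.mul_conj', ← Complex.star_def, hstar, Complex.ofReal_natCast]
  linear_combination χ (-1) * hχ.gaussSum_inv_mul_gaussSum + (N : ℂ) * hsq

lemma IsPrimitive.sum_inv_mul_sum_stdAddChar {χ : DirichletCharacter ℂ N} (hχ : χ.IsPrimitive)
    {ι : Type*} (s : Finset ι) (a : ι → ℂ) (x : ι → ZMod N) :
    ∑ b, χ⁻¹ b * ∑ i ∈ s, a i * stdAddChar (x i * b)
      = (∑ i ∈ s, a i * χ (x i)) * gaussSum χ⁻¹ stdAddChar := by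
  simp_rw [mul_sum, sum_mul]
  rw [sum_comm]
  refine sum_congr rfl fun i _ ↦ ?_
  have h := gaussSum_mulShift_of_isPrimitive stdAddChar hχ.inv (x i)
  rw [inv_inv] at h
  rw [mul_assoc, ← h, gaussSum, mul_sum]
  exact sum_congr rfl fun b _ ↦ by rw [AddChar.mulShift_apply]; ring

lemma sum_apply_mul_inv_apply (b c : ZMod N) :
    ∑ χ : DirichletCharacter ℂ N, χ b * χ⁻¹ c
      = if IsUnit c ∧ b = c then (N.totient : ℂ) else 0 := by
  by_cases hc : IsUnit c
  · obtain ⟨u, rfl⟩ := hc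
    simp only [MulChar.inv_apply, Ring.inverse_unit, ← map_mul, sum_characters_eq,
      Units.mul_inv_eq_one, u.isUnit, true_and]
  · simp [MulChar.map_nonunit _ hc, hc]

lemma sum_norm_sq_sum_apply_mul (f : ZMod N → ℂ) :
    ∑ χ : DirichletCharacter ℂ N, ‖∑ b, χ b * f b‖ ^ 2
      = N.totient * ∑ b : ZMod N with IsUnit b, ‖f b‖ ^ 2 := by
  apply Complex.ofReal_injective
  push_cast
  calc ∑ χ : DirichletCharacter ℂ N, (‖∑ b, χ b * f b‖ : ℂ) ^ 2
      = ∑ b, ∑ c, f b * star (f c) * ∑ χ : DirichletCharacter ℂ N, χ b * χ⁻¹ c := by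
        simp_rw [← Complex.mul_conj', ← Complex.star_def, star_sum, star_mul',
          MulChar.star_apply', sum_mul_sum, mul_sum]
        rw [sum_comm]
        refine sum_congr rfl fun b _ ↦ ?_
        rw [sum_comm]
        exact sum_congr rfl fun c _ ↦ sum_congr rfl fun χ _ ↦ by ring
    _ = N.totient * ∑ b : ZMod N with IsUnit b, (‖f b‖ : ℂ) ^ 2 := by
        simp_rw [sum_apply_mul_inv_apply, mul_ite, mul_zero, sum_filter, mul_sum]
        refine sum_congr rfl fun b _ ↦ ?_
        rw [Fintype.sum_eq_single b fun c hc ↦ if_neg fun h ↦ hc h.2.symm]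
        simp only [and_true]
        split_ifs
        · rw [Complex.star_def, Complex.mul_conj', mul_comm]
        · exact (mul_zero _).symm

theorem card_mul_sum_isPrimitive_norm_sq_le {ι : Type*} (s : Finset ι) (a : ι → ℂ)
    (x : ι → ZMod N) :
    N * ∑ χ : DirichletCharacter ℂ N with χ.IsPrimitive, ‖∑ i ∈ s, a i * χ (x i)‖ ^ 2
      ≤ N.totient * ∑ b : ZMod N with IsUnit b, ‖∑ i ∈ s, a i * stdAddChar (x i * b)‖ ^ 2 := by
  set T : ZMod N → ℂ := fun b ↦ ∑ i ∈ s, a i * stdAddChar (x i * b)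
  calc N * ∑ χ : DirichletCharacter ℂ N with χ.IsPrimitive, ‖∑ i ∈ s, a i * χ (x i)‖ ^ 2
      = ∑ χ : DirichletCharacter ℂ N with χ.IsPrimitive, ‖∑ b, χ⁻¹ b * T b‖ ^ 2 := by
        rw [mul_sum]
        refine sum_congr rfl fun χ hχ ↦ ?_
        have hχ := (mem_filter.1 hχ).2
        rw [hχ.sum_inv_mul_sum_stdAddChar, norm_mul, mul_pow, hχ.inv.norm_gaussSum_sq, mul_comm]
    _ ≤ ∑ χ : DirichletCharacter ℂ N, ‖∑ b, χ⁻¹ b * T b‖ ^ 2 :=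
        sum_le_sum_of_subset_of_nonneg (filter_subset _ _) fun _ _ _ ↦ by positivity
    _ = ∑ χ : DirichletCharacter ℂ N, ‖∑ b, χ b * T b‖ ^ 2 :=
        Equiv.sum_comp (Equiv.inv _) fun χ : DirichletCharacter ℂ N ↦ ‖∑ b, χ b * T b‖ ^ 2
    _ = _ := sum_norm_sq_sum_apply_mul T

end DirichletCharacter

lemma Nat.totient_sq (q : ℕ) : (q ^ 2).totient = q * q.totient := by
  rcases q.eq_zero_or_pos with rfl | hq
  · simp
  have h := Nat.totient_gcd_mul_totient_mul q q
  rw [Nat.gcd_self, ← sq] at h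
  exact Nat.eq_of_mul_eq_mul_left (Nat.totient_pos.2 hq) (by rw [h]; ring)

lemma e_intCast_div (N : ℕ) [NeZero N] (m : ℤ) : e (m / N) = ZMod.stdAddChar (m : ZMod N) := by
  rw [ZMod.stdAddChar_coe, e]
  push_cast
  ring_nf

lemma ZMod.sum_range_coprime_eq_sum_isUnit {M : Type*} [AddCommMonoid M] (N : ℕ) [NeZero N]
    (g : ZMod N → M) :
    ∑ r ∈ range N with r.Coprime N, g r = ∑ b : ZMod N with IsUnit b, g b := by
  refine sum_nbij' (fun r ↦ (r : ZMod N)) ZMod.val ?_ ?_ ?_ ?_ fun _ _ ↦ rfl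
  · intro r hr
    exact mem_filter.2 ⟨mem_univ _, (ZMod.isUnit_iff_coprime r N).2 (mem_filter.1 hr).2⟩
  · intro b hb
    refine mem_filter.2 ⟨mem_range.2 b.val_lt, (ZMod.isUnit_iff_coprime b.val N).1 ?_⟩
    rw [ZMod.natCast_zmod_val]
    exact (mem_filter.1 hb).2
  · intro r hr
    exact ZMod.val_cast_of_lt (mem_range.1 (mem_filter.1 hr).1)
  · intro b _
    exact ZMod.natCast_zmod_val b

theorem stmt13_general (q : ℕ) (hq : 0 < q) (M : ℤ) (N : ℕ) (a : ℤ → ℂ) :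
    ∑ χ ∈ Finset.univ.filter
        (fun χ : DirichletCharacter ℂ (q^2) => χ.IsPrimitive),
      ‖∑ n ∈ Finset.Icc (M+1) (M+(N:ℤ)), a n * χ (n : ZMod (q^2))‖ ^ 2
    ≤ ((Nat.totient q : ℝ) / (q : ℝ)) *
      ∑ r ∈ (Finset.range (q^2)).filter (fun r => Nat.gcd r q = 1),
        ‖∑ n ∈ Finset.Icc (M+1) (M+(N:ℤ)), a n * e (((r:ℝ) * (n:ℝ)) / (q:ℝ)^2)‖ ^ 2 := by
  have : NeZero (q ^ 2) := ⟨by positivity⟩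
  have hsieve := DirichletCharacter.card_mul_sum_isPrimitive_norm_sq_le
    (Icc (M + 1) (M + N)) a (fun n ↦ (n : ZMod (q ^ 2)))
  rw [← ZMod.sum_range_coprime_eq_sum_isUnit, Nat.totient_sq] at hsieve
  have hexp (r : ℕ) (n : ℤ) :
      e ((r : ℝ) * n / (q : ℝ) ^ 2) = ZMod.stdAddChar ((n : ZMod (q ^ 2)) * (r : ZMod (q ^ 2))) := by
    rw [show (n : ZMod (q ^ 2)) * r = ((n * r : ℤ) : ZMod (q ^ 2)) by push_cast; ring,
      ← e_intCast_div]
    push_cast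
    ring_nf
  simp_rw [hexp, ← Nat.coprime_iff_gcd_eq_one, ← Nat.coprime_pow_right_iff two_pos _ q]
  push_cast at hsieve
  have hq' : (0 : ℝ) < q := by exact_mod_cast hq
  rw [div_mul_eq_mul_div, le_div_iff₀ hq']
  exact le_of_mul_le_mul_left (by linarith) hq'

theorem stmt13 (q : ℕ) (hq : 0 < q) (M : ℤ) (N : ℕ) (hN : 0 < N) (a : ℤ → ℂ) :
    ∑ χ ∈ Finset.univ.filter
        (fun χ : DirichletCharacter ℂ (q^2) => χ.IsPrimitive),
      ‖∑ n ∈ Finset.Icc (M+1) (M+(N:ℤ)), a n * χ (n : ZMod (q^2))‖ ^ 2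
    ≤ ((Nat.totient q : ℝ) / (q : ℝ)) *
      ∑ r ∈ (Finset.range (q^2)).filter (fun r => Nat.gcd r q = 1),
        ‖∑ n ∈ Finset.Icc (M+1) (M+(N:ℤ)), a n * e (((r:ℝ) * (n:ℝ)) / (q:ℝ)^2)‖ ^ 2 :=
  stmt13_general q hq M N a
end

section
/- For every ε > 0 there exists a constant C(ε) > 0 depending only on ε such that for all positive integers Q, N, all integers q with Q < q ≤ 2Q, and all integers a with gcd(a,q) = 1, one has ∑_{0 < m < N/Q} τ(m) · min{ Q, ‖a m / q²‖^{−1} } ≤ C(ε) · ( N/Q + Q² ) · N^ε, where τ(m) is the number of positive divisors of m. -/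
/-!
By the divisor bound, `τ(m) ≤ C_δ N ^ δ`, so it suffices to bound the unweighted sum over
`m < N / Q`. Since `a` is invertible modulo `q²`, each residue `r` is hit by `a m mod q²` at most
`N / (Q q²) + 1` times, and the complete sum `∑_{r mod q²} min {Q, ‖r / q²‖⁻¹}` is at most
`Q + 2 q² (1 + log q²)` by comparison with the harmonic series. As `Q < q ≤ 2Q`, the product is
`≪ (N / Q + Q²) log N`, and `log N ≪_δ N ^ δ`.
-/

open Finset Real
open scoped Classical

noncomputable def dist01 (x : ℝ) : ℝ := |x - round x|

theorem natCast_add_one_le_pow_of_two_le {x : ℝ} (hx : 2 ≤ x) (e : ℕ) : (e + 1 : ℝ) ≤ x ^ e :=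
  calc (e + 1 : ℝ) ≤ 2 ^ e := by exact_mod_cast Nat.lt_two_pow_self
    _ ≤ x ^ e := pow_le_pow_left₀ zero_le_two hx e

theorem natCast_add_one_le_mul_two_rpow {δ : ℝ} (hδ : 0 < δ) (e : ℕ) :
    (e + 1 : ℝ) ≤ max 1 (δ * log 2)⁻¹ * 2 ^ (e * δ) := by
  set c := δ * log 2
  have hc : 0 < c := mul_pos hδ (log_pos one_lt_two)
  have hKc : 1 ≤ max 1 c⁻¹ * c := by
    rw [← inv_mul_cancel₀ hc.ne']; gcongr; exact le_max_right _ _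
  have hexp : 1 + e * c ≤ 2 ^ (e * δ) := by
    rw [rpow_def_of_pos two_pos, show log 2 * (e * δ) = e * c by ring]
    linarith [add_one_le_exp (e * c)]
  calc (e + 1 : ℝ) ≤ max 1 c⁻¹ + e * (max 1 c⁻¹ * c) := by
        nlinarith [le_max_left 1 c⁻¹, e.cast_nonneg (α := ℝ)]
    _ = max 1 c⁻¹ * (1 + e * c) := by ring
    _ ≤ max 1 c⁻¹ * 2 ^ (e * δ) := by gcongr

theorem natCast_add_one_le_mul_pow_rpow {δ : ℝ} (hδ : 0 < δ) {p : ℕ} (hp : 2 ≤ p) (e : ℕ) :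
    (e + 1 : ℝ) ≤
      (if (p : ℝ) < 2 ^ δ⁻¹ then max 1 (δ * log 2)⁻¹ else 1) * ((p : ℝ) ^ e) ^ δ := by
  have hp' : (2 : ℝ) ≤ p := by exact_mod_cast hp
  split_ifs with hsmall
  · calc (e + 1 : ℝ) ≤ max 1 (δ * log 2)⁻¹ * 2 ^ (e * δ) := natCast_add_one_le_mul_two_rpow hδ e
      _ ≤ max 1 (δ * log 2)⁻¹ * ((p : ℝ) ^ e) ^ δ := by
        rw [← rpow_natCast_mul (by positivity)]; gcongr
  · rw [one_mul, ← rpow_natCast_mul (by positivity), mul_comm, rpow_mul_natCast (by positivity)]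
    apply natCast_add_one_le_pow_of_two_le
    exact (rpow_inv_le_iff_of_pos zero_le_two (by positivity) hδ).1 (not_lt.1 hsmall)

/- Only the primes `p < 2 ^ δ⁻¹` cost a factor `max 1 (δ log 2)⁻¹`; for all other prime powers
`e + 1 ≤ 2 ^ e ≤ (p ^ e) ^ δ`. -/
theorem card_divisors_le_mul_rpow {δ : ℝ} (hδ : 0 < δ) :
    ∃ C > 0, ∀ n : ℕ, n ≠ 0 → (#n.divisors : ℝ) ≤ C * (n : ℝ) ^ δ := by
  set K := max 1 (δ * log 2)⁻¹
  have hK : 1 ≤ K := le_max_left _ _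
  refine ⟨K ^ ⌈(2 : ℝ) ^ δ⁻¹⌉₊, by positivity, fun n hn => ?_⟩
  have hsmall : #{p ∈ n.primeFactors | ((p : ℕ) : ℝ) < 2 ^ δ⁻¹} ≤ ⌈(2 : ℝ) ^ δ⁻¹⌉₊ :=
    (card_le_card fun p hp => mem_range.2 (Nat.lt_ceil.2 (mem_filter.1 hp).2)).trans_eq
      (card_range _)
  calc (#n.divisors : ℝ) = ∏ p ∈ n.primeFactors, ((n.factorization p : ℝ) + 1) := by
        rw [Nat.card_divisors hn]; push_cast; rfl
    _ ≤ ∏ p ∈ n.primeFactors,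
          (if (p : ℝ) < 2 ^ δ⁻¹ then K else 1) * ((p : ℝ) ^ n.factorization p) ^ δ :=
        prod_le_prod (fun _ _ => by positivity) fun p hp =>
          natCast_add_one_le_mul_pow_rpow hδ (Nat.prime_of_mem_primeFactors hp).two_le _
    _ = K ^ #{p ∈ n.primeFactors | ((p : ℕ) : ℝ) < 2 ^ δ⁻¹} * (n : ℝ) ^ δ := by
        rw [prod_mul_distrib, ← prod_filter, prod_const,
          finsetProd_rpow _ _ fun _ _ => by positivity]
        congr 2
        exact_mod_cast (Nat.prod_primeFactors_pow_factorization hn).symm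
    _ ≤ K ^ ⌈(2 : ℝ) ^ δ⁻¹⌉₊ * (n : ℝ) ^ δ :=
        mul_le_mul_of_nonneg_right (pow_le_pow_right₀ hK hsmall) (by positivity)

theorem sum_card_divisors_mul_le {δ C : ℝ} (hδ : 0 ≤ δ) (hC : 0 ≤ C)
    (hτ : ∀ n : ℕ, n ≠ 0 → (#n.divisors : ℝ) ≤ C * (n : ℝ) ^ δ) {f : ℕ → ℝ} (hf : ∀ m, 0 ≤ f m)
    (N : ℕ) (X : ℝ) :
    ∑ m ∈ (range N).filter (fun m : ℕ => 0 < m ∧ (m : ℝ) < X), (#m.divisors : ℝ) * f m ≤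
      C * N ^ δ * ∑ m ∈ range ⌈X⌉₊, f m := by
  rw [mul_sum]
  calc ∑ m ∈ (range N).filter (fun m : ℕ => 0 < m ∧ (m : ℝ) < X), (#m.divisors : ℝ) * f m
      ≤ ∑ m ∈ (range N).filter (fun m : ℕ => 0 < m ∧ (m : ℝ) < X), C * N ^ δ * f m := by
        gcongr with m hm
        · exact hf m
        obtain ⟨hmN, hm0, -⟩ := mem_filter.1 hm
        calc (#m.divisors : ℝ) ≤ C * (m : ℝ) ^ δ := hτ m hm0.ne'
          _ ≤ C * N ^ δ := by gcongr; exact_mod_cast (mem_range.1 hmN).le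
    _ ≤ ∑ m ∈ range ⌈X⌉₊, C * N ^ δ * f m :=
        sum_le_sum_of_subset_of_nonneg
          (fun m hm => mem_range.2 (Nat.lt_ceil.2 (mem_filter.1 hm).2.2))
          fun m _ _ => mul_nonneg (by positivity) (hf m)

theorem dist01_add_intCast (x : ℝ) (k : ℤ) : dist01 (x + k) = dist01 x := by
  simp only [dist01, round_add_intCast, Int.cast_add, add_sub_add_right_eq_sub]

theorem dist01_natCast_div {r n : ℕ} (hrn : r < n) :
    dist01 (r / n) = (min r (n - r) : ℕ) / n := by
  rw [dist01, abs_sub_round_div_natCast_eq, Nat.mod_eq_of_lt hrn]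

noncomputable def cappedInvDist01 (Q x : ℝ) : ℝ :=
  min Q (if dist01 x = 0 then Q else (dist01 x)⁻¹)

theorem cappedInvDist01_nonneg {Q : ℝ} (hQ : 0 ≤ Q) (x : ℝ) : 0 ≤ cappedInvDist01 Q x := by
  unfold cappedInvDist01
  split_ifs
  · exact le_min hQ hQ
  · exact le_min hQ (inv_nonneg.2 (abs_nonneg _))

theorem cappedInvDist01_add_intCast (Q x : ℝ) (k : ℤ) :
    cappedInvDist01 Q (x + k) = cappedInvDist01 Q x := by
  simp only [cappedInvDist01, dist01_add_intCast]

theorem cappedInvDist01_le_inv {Q x : ℝ} (hx : dist01 x ≠ 0) :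
    cappedInvDist01 Q x ≤ (dist01 x)⁻¹ := by
  simpa only [cappedInvDist01, if_neg hx] using min_le_right _ _

theorem cappedInvDist01_natCast_div_le (Q : ℝ) {r n : ℕ} (hr : 0 < r) (hrn : r < n) :
    cappedInvDist01 Q (r / n) ≤ n / r + n / (n - r : ℕ) := by
  have hmin : 0 < min r (n - r) := lt_min hr (Nat.sub_pos_of_lt hrn)
  have hdist : dist01 (r / n) ≠ 0 := by
    rw [dist01_natCast_div hrn]
    exact div_ne_zero (by exact_mod_cast hmin.ne') (by exact_mod_cast (hr.trans hrn).ne')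
  refine (cappedInvDist01_le_inv hdist).trans ?_
  rw [dist01_natCast_div hrn, inv_div]
  rcases min_choice r (n - r) with h | h <;> rw [h]
  · exact le_add_of_nonneg_right (by positivity)
  · exact le_add_of_nonneg_left (by positivity)

theorem sum_Ico_one_inv_le_one_add_log (n : ℕ) : ∑ r ∈ Ico 1 n, (r : ℝ)⁻¹ ≤ 1 + log n :=
  calc ∑ r ∈ Ico 1 n, (r : ℝ)⁻¹ ≤ ∑ r ∈ Icc 1 n, (r : ℝ)⁻¹ :=
        sum_le_sum_of_subset_of_nonneg Ico_subset_Icc_self fun _ _ _ => by positivity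
    _ = harmonic n := by simp [harmonic_eq_sum_Icc]
    _ ≤ 1 + log n := harmonic_le_one_add_log n

theorem sum_range_cappedInvDist01_div_le (Q : ℝ) {n : ℕ} (hn : 0 < n) :
    ∑ r ∈ range n, cappedInvDist01 Q (r / n) ≤ Q + 2 * n * (1 + log n) := by
  have hreflect : ∑ r ∈ Ico 1 n, (n / (n - r : ℕ) : ℝ) = ∑ r ∈ Ico 1 n, (n / r : ℝ) := by
    simpa using sum_Ico_reflect (fun r => (n / r : ℝ)) 1 (m := n) (n := n) (by omega)
  have hharm : ∑ r ∈ Ico 1 n, (n / r : ℝ) ≤ n * (1 + log n) := by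
    simp only [div_eq_mul_inv, ← mul_sum]
    gcongr
    exact sum_Ico_one_inv_le_one_add_log n
  rw [range_eq_Ico, sum_eq_sum_Ico_succ_bot hn]
  calc cappedInvDist01 Q ((0 : ℕ) / n) + ∑ r ∈ Ico 1 n, cappedInvDist01 Q (r / n)
      ≤ Q + ∑ r ∈ Ico 1 n, (n / r + n / (n - r : ℕ) : ℝ) := by
        gcongr with r hr
        · exact min_le_left _ _
        · exact cappedInvDist01_natCast_div_le Q (mem_Ico.1 hr).1 (mem_Ico.1 hr).2
    _ ≤ Q + 2 * n * (1 + log n) := by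
        rw [sum_add_distrib, hreflect]; linarith

theorem sum_comp_le_mul_sum_of_card_fiber_le {ι κ : Type*} [DecidableEq κ] {s : Finset ι}
    {t : Finset κ} {g : ι → κ} (hg : ∀ i ∈ s, g i ∈ t) {f : κ → ℝ} (hf : ∀ j ∈ t, 0 ≤ f j)
    {K : ℕ} (hK : ∀ j ∈ t, #{i ∈ s | g i = j} ≤ K) :
    ∑ i ∈ s, f (g i) ≤ K * ∑ j ∈ t, f j := by
  rw [← sum_fiberwise_of_maps_to hg, mul_sum]
  gcongr with j hj
  rw [sum_congr rfl fun i hi => congrArg f (mem_filter.1 hi).2, sum_const, nsmul_eq_mul]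
  gcongr
  · exact hf j hj
  · exact_mod_cast hK j hj

theorem card_filter_range_natCast_eq_le {n : ℕ} (hn : 0 < n) (M : ℕ) (y : ZMod n) :
    #{m ∈ range M | ((m : ℕ) : ZMod n) = y} ≤ M / n + 1 := by
  have : NeZero n := ⟨hn.ne'⟩
  have hy : {m ∈ range M | ((m : ℕ) : ZMod n) = y} = {m ∈ range M | m ≡ y.val [MOD n]} := by
    simp only [← ZMod.natCast_eq_natCast_iff, ZMod.natCast_zmod_val]
  rw [hy, ← Nat.count_eq_card_filter_range, Nat.count_modEq_card _ hn]
  split_ifs <;> omega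

theorem cappedInvDist01_intCast_div (Q : ℝ) {n : ℕ} [NeZero n] (k : ℤ) :
    cappedInvDist01 Q (k / n) = cappedInvDist01 Q ((k : ZMod n).val / n) := by
  have hk : (k : ℝ) = ((k : ZMod n).val : ℝ) + n * (k / n : ℤ) := by
    rw [← Int.cast_natCast (ZMod.val _), ZMod.val_intCast]
    exact_mod_cast (Int.emod_add_mul_ediv k n).symm
  rw [hk, add_div, mul_div_cancel_left₀ _ (NeZero.ne (n : ℝ)), cappedInvDist01_add_intCast]

theorem sum_range_cappedInvDist01_mul_div_le {Q : ℝ} (hQ : 0 ≤ Q) {n : ℕ} (hn : 0 < n) {a : ℤ}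
    (ha : IsCoprime a n) (M : ℕ) :
    ∑ m ∈ range M, cappedInvDist01 Q (a * m / n) ≤
      (M / n + 1) * ∑ r ∈ range n, cappedInvDist01 Q (r / n) := by
  have : NeZero n := ⟨hn.ne'⟩
  have hu : IsUnit (a : ZMod n) := (ZMod.coe_int_isUnit_iff_isCoprime a n).2 ha.symm
  -- `m ↦ a m mod n` has fibres inside residue classes, because `a` is invertible mod `n`
  have hfiber : ∀ r ∈ range n,
      #{m ∈ range M | ((a * (m : ℕ) : ℤ) : ZMod n).val = r} ≤ M / n + 1 := by
    intro r _
    refine (card_le_card fun m hm => ?_).trans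
      (card_filter_range_natCast_eq_le hn M ((a : ZMod n)⁻¹ * r))
    obtain ⟨hmM, hmr⟩ := mem_filter.1 hm
    refine mem_filter.2 ⟨hmM, ?_⟩
    rw [← hmr, ZMod.natCast_zmod_val, Int.cast_mul, Int.cast_natCast, ← mul_assoc,
      ZMod.inv_mul_of_unit _ hu, one_mul]
  calc ∑ m ∈ range M, cappedInvDist01 Q (a * m / n)
      = ∑ m ∈ range M, cappedInvDist01 Q (((a * (m : ℕ) : ℤ) : ZMod n).val / n) :=
        sum_congr rfl fun m _ => by rw [← cappedInvDist01_intCast_div]; push_cast; rfl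
    _ ≤ (M / n + 1 : ℕ) * ∑ r ∈ range n, cappedInvDist01 Q (r / n) :=
        sum_comp_le_mul_sum_of_card_fiber_le (g := fun m : ℕ => ((a * m : ℤ) : ZMod n).val)
          (f := fun r : ℕ => cappedInvDist01 Q (r / n)) (fun _ _ => mem_range.2 (ZMod.val_lt _))
          (fun _ _ => cappedInvDist01_nonneg hQ _) hfiber
    _ ≤ (M / n + 1) * ∑ r ∈ range n, cappedInvDist01 Q (r / n) := by
        gcongr
        · exact sum_nonneg fun _ _ => cappedInvDist01_nonneg hQ _
        · push_cast; gcongr; exact Nat.cast_div_le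

theorem ceil_div_sq_add_one_mul_le {X Q q L : ℝ} (hX : 0 ≤ X) (hQ : 1 ≤ Q) (hQq : Q ≤ q)
    (hq : q ≤ 2 * Q) (hL : 1 ≤ L) :
    ((⌈X⌉₊ : ℝ) / q ^ 2 + 1) * (Q + 2 * q ^ 2 * L) ≤ 12 * (X + Q ^ 2) * L := by
  have hY : (⌈X⌉₊ : ℝ) ≤ X + 1 := (Nat.ceil_lt_add_one hX).le
  have hq0 : 0 < q := by linarith
  have hQq2 : Q ≤ q ^ 2 := by nlinarith
  have hfirst : (⌈X⌉₊ : ℝ) * Q / q ^ 2 ≤ X + 1 := by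
    rw [div_le_iff₀ (by positivity)]
    exact mul_le_mul hY hQq2 (by linarith) (by positivity)
  have hexpand : ((⌈X⌉₊ : ℝ) / q ^ 2 + 1) * (Q + 2 * q ^ 2 * L) =
      (⌈X⌉₊ : ℝ) * Q / q ^ 2 + 2 * ⌈X⌉₊ * L + Q + 2 * q ^ 2 * L := by
    field_simp; ring
  have hYL : (⌈X⌉₊ : ℝ) * L ≤ (X + 1) * L := by gcongr
  have hXL : X ≤ X * L := le_mul_of_one_le_right hX hL
  have hQ2 : 1 ≤ Q ^ 2 := one_le_pow₀ hQ
  have hQ2L : Q ^ 2 ≤ Q ^ 2 * L := le_mul_of_one_le_right (by positivity) hL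
  have hq2L : q ^ 2 * L ≤ 4 * Q ^ 2 * L := by gcongr; nlinarith
  rw [hexpand]
  nlinarith

theorem one_add_log_le_mul_rpow {δ x N : ℝ} (hδ : 0 < δ) (hx : 0 < x) (hN : 1 ≤ N)
    (hxN : x ≤ 4 * N ^ 2) : 1 + log x ≤ (4 + 2 / δ) * N ^ δ := by
  have hNδ : 1 ≤ N ^ δ := one_le_rpow hN hδ.le
  have hlog4 : log 4 ≤ 3 := by linarith [log_le_sub_one_of_pos (show (0 : ℝ) < 4 by norm_num)]
  have hlogN : log N ≤ N ^ δ / δ := log_le_rpow_div (by linarith) hδ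
  calc 1 + log x ≤ 1 + log (4 * N ^ 2) := by gcongr
    _ = 1 + log 4 + 2 * log N := by
        rw [log_mul (by norm_num) (by positivity), log_pow]; push_cast; ring
    _ ≤ 4 + 2 / δ * N ^ δ := by rw [div_mul_eq_mul_div, mul_div_assoc]; linarith
    _ ≤ (4 + 2 / δ) * N ^ δ := by rw [add_mul]; gcongr; linarith

theorem sum_range_cappedInvDist01_mul_div_sq_le {Q : ℝ} (hQ : 1 ≤ Q) {q : ℕ} (hQq : Q ≤ q)
    (hq : q ≤ 2 * Q) {a : ℤ} (ha : IsCoprime a q) {X : ℝ} (hX : 0 ≤ X) :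
    ∑ m ∈ range ⌈X⌉₊, cappedInvDist01 Q (a * m / q ^ 2) ≤
      12 * (X + Q ^ 2) * (1 + log ((q : ℝ) ^ 2)) := by
  have hq2 : 0 < q ^ 2 := pow_pos (by exact_mod_cast (zero_lt_one.trans_le (hQ.trans hQq))) 2
  have hblock := sum_range_cappedInvDist01_mul_div_le (zero_le_one.trans hQ) hq2
    (by push_cast; exact ha.pow_right) ⌈X⌉₊
  have hresidue := sum_range_cappedInvDist01_div_le Q hq2
  have hlog : 1 ≤ 1 + log ((q : ℝ) ^ 2) := by
    linarith [log_nonneg (one_le_pow₀ (hQ.trans hQq) : (1 : ℝ) ≤ q ^ 2)]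
  push_cast at hblock hresidue
  calc _ ≤ ((⌈X⌉₊ : ℝ) / q ^ 2 + 1) * (Q + 2 * q ^ 2 * (1 + log ((q : ℝ) ^ 2))) :=
        hblock.trans (by gcongr)
    _ ≤ 12 * (X + Q ^ 2) * (1 + log ((q : ℝ) ^ 2)) :=
        ceil_div_sq_add_one_mul_le hX hQ hQq hq hlog

theorem stmt17 : ∀ ε : ℝ, ε > 0 → ∃ C : ℝ, C > 0 ∧
    ∀ (Q N : ℕ), 0 < Q → 0 < N → ∀ q : ℕ, Q < q → q ≤ 2*Q → ∀ a : ℤ, Int.gcd a q = 1 →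
    ∑ m ∈ (Finset.range N).filter (fun m : ℕ => 0 < m ∧ (m:ℝ) < (N:ℝ)/(Q:ℝ)),
      ((Nat.divisors m).card : ℝ) *
        min (Q:ℝ) (if dist01 ((a:ℝ)*(m:ℝ)/(q:ℝ)^2) = 0 then (Q:ℝ)
                   else (dist01 ((a:ℝ)*(m:ℝ)/(q:ℝ)^2))⁻¹)
    ≤ C * ((N:ℝ)/(Q:ℝ) + (Q:ℝ)^2) * (N:ℝ)^ε := by
  intro ε hε
  obtain ⟨C, hC, hτ⟩ := card_divisors_le_mul_rpow (half_pos hε)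
  refine ⟨12 * (4 + 2 / (ε / 2)) * C, by positivity, fun Q N hQ hN q hQq hq a ha => ?_⟩
  -- a nonempty sum forces `Q < N`, which is what lets `log q²` be absorbed into `N ^ (ε / 2)`
  rcases ((range N).filter fun m : ℕ => 0 < m ∧ (m : ℝ) < N / Q).eq_empty_or_nonempty
    with hS | ⟨m, hm⟩
  · rw [hS, sum_empty]; positivity
  have hQ' : (1 : ℝ) ≤ Q := by exact_mod_cast hQ
  have hQq' : (Q : ℝ) ≤ q := by exact_mod_cast hQq.le
  have hq' : (q : ℝ) ≤ 2 * Q := by exact_mod_cast hq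
  have hQN : (Q : ℝ) < N := by
    obtain ⟨-, hm0, hmN⟩ := mem_filter.1 hm
    have : (1 : ℝ) ≤ m := by exact_mod_cast hm0
    rw [lt_div_iff₀ (by positivity)] at hmN; nlinarith
  have hlog : 1 + log ((q : ℝ) ^ 2) ≤ (4 + 2 / (ε / 2)) * N ^ (ε / 2) :=
    one_add_log_le_mul_rpow (half_pos hε) (by nlinarith) (by exact_mod_cast hN) (by nlinarith)
  calc _ ≤ C * N ^ (ε / 2) * ∑ m ∈ range ⌈(N : ℝ) / Q⌉₊, cappedInvDist01 Q (a * m / q ^ 2) :=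
        sum_card_divisors_mul_le (half_pos hε).le hC.le hτ
          (fun _ => cappedInvDist01_nonneg (Nat.cast_nonneg _) _) N _
    _ ≤ C * N ^ (ε / 2) * (12 * (N / Q + Q ^ 2) * (1 + log ((q : ℝ) ^ 2))) := by
        gcongr
        exact sum_range_cappedInvDist01_mul_div_sq_le hQ' hQq' hq'
          (Int.isCoprime_iff_gcd_eq_one.2 ha) (by positivity)
    _ ≤ C * N ^ (ε / 2) * (12 * (N / Q + Q ^ 2) * ((4 + 2 / (ε / 2)) * N ^ (ε / 2))) := by
        gcongr
    _ = 12 * (4 + 2 / (ε / 2)) * C * (N / Q + Q ^ 2) * N ^ ε := by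
        rw [show (N : ℝ) ^ ε = N ^ (ε / 2) * N ^ (ε / 2) by
          rw [← rpow_add (by exact_mod_cast hN), add_halves]]
        ring
end
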